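/- Let T be a bounded linear operator on a complex Banach space. Suppose σ_a(T) is the disjoint union of σ_SF₊⁻(T) and E^0(T) (the eigenvalues of finite multiplicity isolated in σ(T)). Then σ(T) is the disjoint union of σ_W(T) and Π^0(T) if and only if σ_W(T) \ σ_SF₊⁻(T) = (E^0(T) \ Π^0(T)) ∪ (σ(T) \ σ_a(T)), where the sets E^0(T) \ Π^0(T) and σ(T) \ σ_a(T) are disjoint. -/

import Mathlib

open LinearMap Module

namespace SpectralPartition

variable {X : Type*} [NormedAddCommGroup X] [NormedSpace ℂ X] [CompleteSpace X]

/-- `T - λ I`. -/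
noncomputable def lam (T : X →L[ℂ] X) (l : ℂ) : X →L[ℂ] X := T - l • (1 : X →L[ℂ] X)

/-- `T` maps the range of `T ^ n` into itself. -/
theorem maps_range_pow (T : X →L[ℂ] X) (n : ℕ) :
    ∀ x ∈ LinearMap.range (((T ^ n) : X →L[ℂ] X) : X →ₗ[ℂ] X), (T : X →ₗ[ℂ] X) x ∈ LinearMap.range (((T ^ n) : X →L[ℂ] X) : X →ₗ[ℂ] X) := by
  rintro x ⟨y, rfl⟩
  refine ⟨T y, ?_⟩
  have h : T ^ n * T = T * T ^ n := by rw [← pow_succ, ← pow_succ']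
  calc (T ^ n) (T y) = (T ^ n * T) y := (ContinuousLinearMap.mul_apply _ _ _).symm
    _ = (T * T ^ n) y := by rw [h]
    _ = T ((T ^ n) y) := ContinuousLinearMap.mul_apply _ _ _

/-- The restriction `T_[n]` of `T` to the range of `T ^ n`. -/
noncomputable def restr (T : X →L[ℂ] X) (n : ℕ) :
    LinearMap.range (((T ^ n) : X →L[ℂ] X) : X →ₗ[ℂ] X) →ₗ[ℂ] LinearMap.range (((T ^ n) : X →L[ℂ] X) : X →ₗ[ℂ] X) :=
  (T : X →ₗ[ℂ] X).restrict (maps_range_pow T n)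

/-- Weyl operator: Fredholm of index `0`. -/
def IsWeyl (T : X →L[ℂ] X) : Prop :=
  IsClosed ((LinearMap.range (((T) : X →L[ℂ] X) : X →ₗ[ℂ] X) : Submodule ℂ X) : Set X) ∧
  FiniteDimensional ℂ (LinearMap.ker (((T) : X →L[ℂ] X) : X →ₗ[ℂ] X)) ∧
  FiniteDimensional ℂ (X ⧸ LinearMap.range (((T) : X →L[ℂ] X) : X →ₗ[ℂ] X)) ∧
  finrank ℂ (LinearMap.ker (((T) : X →L[ℂ] X) : X →ₗ[ℂ] X)) = finrank ℂ (X ⧸ LinearMap.range (((T) : X →L[ℂ] X) : X →ₗ[ℂ] X))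

/-- B-Weyl operator: for some `n`, `R(T^n)` is closed and `T_[n]` is Fredholm of index `0`. -/
def IsBWeyl (T : X →L[ℂ] X) : Prop :=
  ∃ n : ℕ, IsClosed ((LinearMap.range (((T ^ n) : X →L[ℂ] X) : X →ₗ[ℂ] X) : Submodule ℂ X) : Set X) ∧
    IsClosed ((LinearMap.range (((T ^ (n + 1)) : X →L[ℂ] X) : X →ₗ[ℂ] X) : Submodule ℂ X) : Set X) ∧
    FiniteDimensional ℂ (LinearMap.ker (restr T n)) ∧
    FiniteDimensional ℂ (↥(LinearMap.range (((T ^ n) : X →L[ℂ] X) : X →ₗ[ℂ] X)) ⧸ LinearMap.range (restr T n)) ∧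
    finrank ℂ (LinearMap.ker (restr T n)) =
      finrank ℂ (↥(LinearMap.range (((T ^ n) : X →L[ℂ] X) : X →ₗ[ℂ] X)) ⧸ LinearMap.range (restr T n))

/-- Weyl spectrum. -/
noncomputable def σW (T : X →L[ℂ] X) : Set ℂ := {l | ¬ IsWeyl (lam T l)}

/-- B-Weyl spectrum. -/
noncomputable def σBW (T : X →L[ℂ] X) : Set ℂ := {l | ¬ IsBWeyl (lam T l)}

/-- `l` is an isolated point of the set `s`. -/
def IsolatedIn (l : ℂ) (s : Set ℂ) : Prop := l ∈ s ∧ ∃ U ∈ nhds l, U ∩ s = {l}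

/-- Approximate point spectrum: `T - λ` is not bounded below. -/
noncomputable def σa (T : X →L[ℂ] X) : Set ℂ :=
  {l | ¬ ∃ c > (0 : ℝ), ∀ x : X, c * ‖x‖ ≤ ‖lam T l x‖}

/-- Eigenvalues of `T` isolated in the spectrum. -/
noncomputable def Espec (T : X →L[ℂ] X) : Set ℂ :=
  {l | LinearMap.ker (((lam T l) : X →L[ℂ] X) : X →ₗ[ℂ] X) ≠ ⊥ ∧ IsolatedIn l (spectrum ℂ T)}

/-- Eigenvalues of finite multiplicity isolated in the spectrum. -/
noncomputable def E0spec (T : X →L[ℂ] X) : Set ℂ :=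
  {l | l ∈ Espec T ∧ FiniteDimensional ℂ (LinearMap.ker (((lam T l) : X →L[ℂ] X) : X →ₗ[ℂ] X))}

/-- Eigenvalues of `T` isolated in the approximate point spectrum. -/
noncomputable def Ea (T : X →L[ℂ] X) : Set ℂ :=
  {l | LinearMap.ker (((lam T l) : X →L[ℂ] X) : X →ₗ[ℂ] X) ≠ ⊥ ∧ IsolatedIn l (σa T)}

/-- Eigenvalues of finite multiplicity isolated in the approximate point spectrum. -/
noncomputable def Ea0 (T : X →L[ℂ] X) : Set ℂ :=
  {l | l ∈ Ea T ∧ FiniteDimensional ℂ (LinearMap.ker (((lam T l) : X →L[ℂ] X) : X →ₗ[ℂ] X))}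

/-- The kernels of powers of `S` stabilize at `n` (ascent ≤ n). -/
def KerStab (S : X →L[ℂ] X) (n : ℕ) : Prop :=
  LinearMap.ker (((S ^ n) : X →L[ℂ] X) : X →ₗ[ℂ] X) = LinearMap.ker (((S ^ (n + 1)) : X →L[ℂ] X) : X →ₗ[ℂ] X)

/-- The ranges of powers of `S` stabilize at `n` (descent ≤ n). -/
def RanStab (S : X →L[ℂ] X) (n : ℕ) : Prop :=
  LinearMap.range (((S ^ n) : X →L[ℂ] X) : X →ₗ[ℂ] X) = LinearMap.range (((S ^ (n + 1)) : X →L[ℂ] X) : X →ₗ[ℂ] X)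

/-- Drazin invertible: finite ascent and finite descent. -/
def IsDrazinInv (S : X →L[ℂ] X) : Prop :=
  (∃ n, KerStab S n) ∧ (∃ n, RanStab S n)

/-- `l` is a pole of the resolvent of `T`. -/
noncomputable def IsPole (T : X →L[ℂ] X) (l : ℂ) : Prop :=
  l ∈ spectrum ℂ T ∧ IsDrazinInv (lam T l)

/-- Set of poles of the resolvent of `T`. -/
noncomputable def Poles (T : X →L[ℂ] X) : Set ℂ := {l | IsPole T l}

/-- Set of poles of finite rank of `T`. -/
noncomputable def Poles0 (T : X →L[ℂ] X) : Set ℂ :=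
  {l | IsPole T l ∧ FiniteDimensional ℂ (LinearMap.ker (((lam T l) : X →L[ℂ] X) : X →ₗ[ℂ] X))}

/-- Drazin spectrum. -/
noncomputable def σD (T : X →L[ℂ] X) : Set ℂ := {l | ¬ IsDrazinInv (lam T l)}

/-- Browder operator: Fredholm of finite ascent and descent. -/
def IsBrowder (S : X →L[ℂ] X) : Prop :=
  IsClosed ((LinearMap.range (((S) : X →L[ℂ] X) : X →ₗ[ℂ] X) : Submodule ℂ X) : Set X) ∧
  FiniteDimensional ℂ (LinearMap.ker (((S) : X →L[ℂ] X) : X →ₗ[ℂ] X)) ∧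
  FiniteDimensional ℂ (X ⧸ LinearMap.range (((S) : X →L[ℂ] X) : X →ₗ[ℂ] X)) ∧
  (∃ n, KerStab S n) ∧ (∃ n, RanStab S n)

/-- Browder spectrum. -/
noncomputable def σB (T : X →L[ℂ] X) : Set ℂ := {l | ¬ IsBrowder (lam T l)}

/-- Upper semi-Weyl: upper semi-Fredholm with index ≤ 0. -/
def IsUpperSemiWeyl (S : X →L[ℂ] X) : Prop :=
  IsClosed ((LinearMap.range (((S) : X →L[ℂ] X) : X →ₗ[ℂ] X) : Submodule ℂ X) : Set X) ∧
  FiniteDimensional ℂ (LinearMap.ker (((S) : X →L[ℂ] X) : X →ₗ[ℂ] X)) ∧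
  Module.rank ℂ (LinearMap.ker (((S) : X →L[ℂ] X) : X →ₗ[ℂ] X)) ≤ Module.rank ℂ (X ⧸ LinearMap.range (((S) : X →L[ℂ] X) : X →ₗ[ℂ] X))

/-- Upper semi-Weyl spectrum `σ_{SF₊⁻}`. -/
noncomputable def σSF (T : X →L[ℂ] X) : Set ℂ := {l | ¬ IsUpperSemiWeyl (lam T l)}

/-- Upper semi-B-Weyl: for some `n`, `R(S^n)` is closed and `S_[n]` is
upper semi-Fredholm with index ≤ 0. -/
def IsUpperSemiBWeyl (S : X →L[ℂ] X) : Prop :=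
  ∃ n : ℕ, IsClosed ((LinearMap.range (((S ^ n) : X →L[ℂ] X) : X →ₗ[ℂ] X) : Submodule ℂ X) : Set X) ∧
    IsClosed ((LinearMap.range (((S ^ (n + 1)) : X →L[ℂ] X) : X →ₗ[ℂ] X) : Submodule ℂ X) : Set X) ∧
    FiniteDimensional ℂ (LinearMap.ker (restr S n)) ∧
    Module.rank ℂ (LinearMap.ker (restr S n)) ≤
      Module.rank ℂ (↥(LinearMap.range (((S ^ n) : X →L[ℂ] X) : X →ₗ[ℂ] X)) ⧸ LinearMap.range (restr S n))

/-- Upper semi-B-Weyl spectrum `σ_{SBF₊⁻}`. -/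
noncomputable def σSBF (T : X →L[ℂ] X) : Set ℂ := {l | ¬ IsUpperSemiBWeyl (lam T l)}

/-- `l` is a left pole of `T`: `l ∈ σ_a(T)`, the ascent `a` of `T - l` is finite
and `R((T-l)^{a+1})` is closed. -/
noncomputable def IsLeftPole (T : X →L[ℂ] X) (l : ℂ) : Prop :=
  l ∈ σa T ∧ ∃ n : ℕ, KerStab (lam T l) n ∧ (∀ m < n, ¬ KerStab (lam T l) m) ∧
    IsClosed ((LinearMap.range ((((lam T l) ^ (n + 1)) : X →L[ℂ] X) : X →ₗ[ℂ] X) : Submodule ℂ X) : Set X)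

/-- Set of left poles of `T`. -/
noncomputable def PolesA (T : X →L[ℂ] X) : Set ℂ := {l | IsLeftPole T l}

/-- Set of left poles of `T` of finite rank. -/
noncomputable def PolesA0 (T : X →L[ℂ] X) : Set ℂ :=
  {l | IsLeftPole T l ∧ FiniteDimensional ℂ (LinearMap.ker (((lam T l) : X →L[ℂ] X) : X →ₗ[ℂ] X))}

end SpectralPartition

/-!
The inclusions `σ_SF₊⁻(T) ⊆ σ_W(T) ⊆ σ(T)`, `E⁰(T) ∪ Π⁰(T) ⊆ σ_a(T) ⊆ σ(T)` and
`σ_W(T) ∩ Π⁰(T) = ∅` turn the equivalence into set algebra. At a pole, `T - λ` cannot be bounded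
below: it would be injective with finite descent, hence invertible. The main analytic input is
that a pole of finite rank is not in the Weyl spectrum. If `f = T - λ` has ascent and descent at most
`p`, then `X = ker f ^ p + range f ^ p`, so a finite-dimensional kernel forces a finite-dimensional
cokernel; since `f ^ (p + 1) = f ^ p ∘ f` has the same kernel and range as `f ^ p`, additivity of
the index gives `index f = 0`; and an operator on a Banach space with finite-dimensional kernel
and cokernel has closed range.
-/

namespace Module.End

section Semiring

variable {R M : Type*} [Semiring R] [AddCommMonoid M] [Module R M] (f : Module.End R M)

theorem range_pow_constant {k : ℕ} (h : range (f ^ k) = range (f ^ (k + 1))) :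
    ∀ m, range (f ^ k) = range (f ^ (k + m))
  | 0 => rfl
  | m + 1 => by
    rw [← add_assoc, pow_succ', mul_eq_comp, range_comp, ← range_pow_constant h m,
      ← range_comp, ← mul_eq_comp, ← pow_succ', h]

theorem range_pow_succ_eq_of_le {a b : ℕ} (h : range (f ^ a) = range (f ^ (a + 1)))
    (hab : a ≤ b) : range (f ^ b) = range (f ^ (b + 1)) := by
  obtain ⟨m, rfl⟩ := Nat.exists_eq_add_of_le hab
  rw [← range_pow_constant f h m, add_assoc, ← range_pow_constant f h (m + 1)]

theorem surjective_of_injective_of_range_pow_eq (hf : Function.Injective f) {k : ℕ}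
    (h : range (f ^ k) = range (f ^ (k + 1))) : Function.Surjective f := by
  intro x
  obtain ⟨y, hy⟩ : (f ^ k) x ∈ range (f ^ (k + 1)) := h ▸ mem_range_self _ x
  refine ⟨y, hf.iterate k ?_⟩
  rw [← coe_pow, ← mul_apply, ← pow_succ]
  exact hy

end Semiring

variable {K V : Type*} [DivisionRing K] [AddCommGroup V] [Module K V] (f : Module.End K V)

theorem ker_pow_succ_eq_of_le {a b : ℕ} (h : ker (f ^ a) = ker (f ^ (a + 1)))
    (hab : a ≤ b) : ker (f ^ b) = ker (f ^ (b + 1)) := by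
  obtain ⟨m, rfl⟩ := Nat.exists_eq_add_of_le hab
  rw [← ker_pow_constant h m, add_assoc, ← ker_pow_constant h (m + 1)]

theorem finiteDimensional_ker_pow [FiniteDimensional K (ker f)] :
    ∀ n, FiniteDimensional K (ker (f ^ n))
  | 0 => by rw [pow_zero, one_eq_id, ker_id]; infer_instance
  | n + 1 => by
    have := finiteDimensional_ker_pow n
    rw [pow_succ, mul_eq_comp, ker_comp]
    infer_instance

theorem ker_pow_sup_range_pow_eq_top {k : ℕ} (h : range (f ^ k) = range (f ^ (k + 1))) :
    ker (f ^ k) ⊔ range (f ^ k) = ⊤ := by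
  refine eq_top_iff.mpr fun x _ => ?_
  obtain ⟨y, hy⟩ : (f ^ k) x ∈ range (f ^ (k + k)) :=
    range_pow_constant f h k ▸ mem_range_self _ x
  refine Submodule.mem_sup.mpr
    ⟨x - (f ^ k) y, ?_, (f ^ k) y, mem_range_self _ y, sub_add_cancel _ _⟩
  rw [mem_ker, map_sub, ← mul_apply, ← pow_add, hy, sub_self]

theorem finiteDimensional_quotient_range_pow {k : ℕ} [FiniteDimensional K (ker (f ^ k))]
    (h : range (f ^ k) = range (f ^ (k + 1))) : FiniteDimensional K (V ⧸ range (f ^ k)) := by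
  refine Module.Finite.of_surjective ((range (f ^ k)).mkQ ∘ₗ (ker (f ^ k)).subtype) ?_
  rintro ⟨x⟩
  obtain ⟨a, ha, b, hb, rfl⟩ :=
    Submodule.mem_sup.mp (ker_pow_sup_range_pow_eq_top f h ▸ Submodule.mem_top (x := x))
  refine ⟨⟨a, ha⟩, (Submodule.Quotient.eq _).mpr ?_⟩
  simpa using neg_mem hb

theorem finiteDimensional_quotient_range_of_range_pow_eq [FiniteDimensional K (ker f)] {k : ℕ}
    (h : range (f ^ k) = range (f ^ (k + 1))) : FiniteDimensional K (V ⧸ range f) := by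
  have := finiteDimensional_ker_pow f k
  have := finiteDimensional_quotient_range_pow f h
  have hle : range (f ^ k) ≤ range f := by
    rw [h, pow_succ', mul_eq_comp]
    exact range_comp_le_range _ _
  exact Module.Finite.of_surjective _ (Submodule.factor_surjective hle)

theorem index_eq_zero_of_ker_pow_eq_of_range_pow_eq [FiniteDimensional K (ker f)] {k : ℕ}
    (hker : ker (f ^ k) = ker (f ^ (k + 1))) (hrange : range (f ^ k) = range (f ^ (k + 1))) :
    f.index = 0 := by
  have := finiteDimensional_ker_pow f k
  have := finiteDimensional_quotient_range_pow f hrange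
  have := finiteDimensional_quotient_range_of_range_pow_eq f hrange
  have hcomp := index_comp (f := f) (f ^ k)
  rw [← mul_eq_comp, ← pow_succ] at hcomp
  have hsucc : (f ^ (k + 1)).index = (f ^ k).index := by
    rw [index_eq_finrank_sub, index_eq_finrank_sub, hker, hrange]
  omega

end Module.End

namespace ContinuousLinearMap

section Units

variable {𝕜 E : Type*} [NontriviallyNormedField 𝕜] [NormedAddCommGroup E] [NormedSpace 𝕜 E]
  {S : E →L[𝕜] E}

theorem bijective_of_isUnit (hS : IsUnit S) : Function.Bijective S :=
  (Module.End.isUnit_iff _).mp (hS.map toLinearMapRingHom)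

theorem exists_antilipschitzWith_of_isUnit (hS : IsUnit S) : ∃ K, AntilipschitzWith K S := by
  obtain ⟨u, rfl⟩ := hS
  exact ⟨_, (ContinuousLinearEquiv.ofUnit u).antilipschitz⟩

end Units

variable {𝕜 E F : Type*} [RCLike 𝕜] [NormedAddCommGroup E] [NormedSpace 𝕜 E] [CompleteSpace E]
  [NormedAddCommGroup F] [NormedSpace 𝕜 F] [CompleteSpace F]

/-- `S` restricted to a closed complement of its kernel is injective with the same range, and an
injective operator whose range has a closed complement has closed range. -/
theorem isClosed_range_of_finiteDimensional (S : E →L[𝕜] F)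
    [FiniteDimensional 𝕜 S.ker] [FiniteDimensional 𝕜 (F ⧸ S.range)] :
    IsClosed (S.range : Set F) := by
  obtain ⟨Z, hZ, hkerZ⟩ :=
    (Submodule.ClosedComplemented.of_finiteDimensional S.ker).exists_isClosed_isCompl
  obtain ⟨W, hW⟩ := S.range.exists_isCompl
  have : FiniteDimensional 𝕜 W := (Submodule.quotientEquivOfIsCompl _ W hW).finiteDimensional
  have : CompleteSpace Z := hZ.completeSpace_coe
  have hrange : (S ∘L Z.subtypeL).range = S.range := by
    rw [toLinearMap_comp, range_comp, Submodule.toLinearMap_subtypeL, Submodule.range_subtype,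
      Submodule.map_eq_range_iff]
    exact hkerZ.symm.codisjoint
  have hker : (S ∘L Z.subtypeL).ker = ⊥ := by
    rw [toLinearMap_comp, ker_comp, Submodule.toLinearMap_subtypeL,
      ← Submodule.disjoint_iff_comap_eq_bot]
    exact hkerZ.symm.disjoint
  rw [← hrange]
  exact (S ∘L Z.subtypeL).closed_complemented_range_of_isCompl_of_ker_eq_bot W (hrange ▸ hW)
    W.closed_of_finiteDimensional hker

end ContinuousLinearMap

namespace SpectralPartition

variable {X : Type*} [NormedAddCommGroup X] [NormedSpace ℂ X]

theorem IsDrazinInv.isWeyl [CompleteSpace X] {S : X →L[ℂ] X} (hS : IsDrazinInv S)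
    (hker : FiniteDimensional ℂ S.ker) : IsWeyl S := by
  obtain ⟨⟨a, ha⟩, ⟨b, hb⟩⟩ := hS
  simp only [KerStab, RanStab, ContinuousLinearMap.toLinearMap_pow] at ha hb
  have hk := Module.End.ker_pow_succ_eq_of_le _ ha (le_max_left a b)
  have hr := Module.End.range_pow_succ_eq_of_le _ hb (le_max_right a b)
  have hcoker := Module.End.finiteDimensional_quotient_range_of_range_pow_eq _ hr
  have hindex := Module.End.index_eq_zero_of_ker_pow_eq_of_range_pow_eq _ hk hr
  rw [index_eq_finrank_sub] at hindex
  exact ⟨S.isClosed_range_of_finiteDimensional, hker, hcoker, by omega⟩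

theorem isDrazinInv_of_isUnit {S : X →L[ℂ] X} (hS : IsUnit S) : IsDrazinInv S := by
  have hbij := ContinuousLinearMap.bijective_of_isUnit hS
  refine ⟨⟨0, ?_⟩, ⟨0, ?_⟩⟩
  · simp [KerStab, Module.End.one_eq_id, ker_eq_bot.mpr hbij.injective]
  · simp [RanStab, Module.End.one_eq_id, range_eq_top.mpr hbij.surjective]

theorem isWeyl_of_isUnit [CompleteSpace X] {S : X →L[ℂ] X} (hS : IsUnit S) : IsWeyl S := by
  refine (isDrazinInv_of_isUnit hS).isWeyl ?_
  rw [ker_eq_bot.mpr (ContinuousLinearMap.bijective_of_isUnit hS).injective]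
  infer_instance

theorem IsWeyl.isUpperSemiWeyl {S : X →L[ℂ] X} (hS : IsWeyl S) : IsUpperSemiWeyl S := by
  obtain ⟨hclosed, hker, hcoker, hindex⟩ := hS
  refine ⟨hclosed, hker, le_of_eq ?_⟩
  rw [← finrank_eq_rank, ← finrank_eq_rank, hindex]

theorem isUnit_lam_iff (T : X →L[ℂ] X) (l : ℂ) : IsUnit (lam T l) ↔ l ∉ spectrum ℂ T := by
  rw [spectrum.notMem_iff, lam, Algebra.algebraMap_eq_smul_one, ← neg_sub, IsUnit.neg_iff]

theorem notMem_σa_iff {T : X →L[ℂ] X} {l : ℂ} :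
    l ∉ σa T ↔ ∃ K, AntilipschitzWith K (lam T l) :=
  not_not.trans antilipschitzWith_iff_exists_mul_le_norm.symm

theorem σa_subset_spectrum (T : X →L[ℂ] X) : σa T ⊆ spectrum ℂ T := by
  intro l hl
  by_contra hspec
  exact notMem_σa_iff.mpr
    (ContinuousLinearMap.exists_antilipschitzWith_of_isUnit ((isUnit_lam_iff T l).mpr hspec)) hl

theorem σW_subset_spectrum [CompleteSpace X] (T : X →L[ℂ] X) : σW T ⊆ spectrum ℂ T :=
  fun l hl => by_contra fun hspec => hl (isWeyl_of_isUnit ((isUnit_lam_iff T l).mpr hspec))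

theorem σSF_subset_σW (T : X →L[ℂ] X) : σSF T ⊆ σW T :=
  fun _ hl hW => hl hW.isUpperSemiWeyl

theorem mem_σa_of_ker_ne_bot {T : X →L[ℂ] X} {l : ℂ} (h : (lam T l).ker ≠ ⊥) : l ∈ σa T := by
  by_contra hl
  obtain ⟨K, hK⟩ := notMem_σa_iff.mp hl
  exact h (ker_eq_bot.mpr hK.injective)

theorem E0spec_subset_σa (T : X →L[ℂ] X) : E0spec T ⊆ σa T :=
  fun _ hl => mem_σa_of_ker_ne_bot hl.1.1

theorem mem_σa_of_isPole [CompleteSpace X] {T : X →L[ℂ] X} {l : ℂ} (h : IsPole T l) : l ∈ σa T := by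
  by_contra hl
  obtain ⟨hspec, -, m, hm⟩ := h
  obtain ⟨K, hK⟩ := notMem_σa_iff.mp hl
  simp only [RanStab, ContinuousLinearMap.toLinearMap_pow] at hm
  have hsurj := Module.End.surjective_of_injective_of_range_pow_eq _ hK.injective hm
  exact (isUnit_lam_iff T l).mp
    (ContinuousLinearMap.isUnit_iff_bijective.mpr ⟨hK.injective, hsurj⟩) hspec

theorem Poles0_subset_σa [CompleteSpace X] (T : X →L[ℂ] X) : Poles0 T ⊆ σa T :=
  fun _ hl => mem_σa_of_isPole hl.1

theorem σW_inter_Poles0_eq_empty [CompleteSpace X] (T : X →L[ℂ] X) : σW T ∩ Poles0 T = ∅ :=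
  Set.eq_empty_iff_forall_notMem.mpr fun _ ⟨hW, hP, hker⟩ => hW (hP.2.isWeyl hker)

theorem partition_iff_of_subsets {α : Type*} {sp W P SF E A : Set α} (hW : W ⊆ sp)
    (hA : A ⊆ sp) (hSF : SF ⊆ W) (hE : E ⊆ A) (hP : P ⊆ A) (hWP : W ∩ P = ∅)
    (hU : A = SF ∪ E) (hD : SF ∩ E = ∅) :
    (sp = W ∪ P ∧ W ∩ P = ∅) ↔ (W \ SF = E \ P ∪ (sp \ A) ∧ E \ P ∩ (sp \ A) = ∅) := by
  subst hU
  simp only [Set.ext_iff, Set.subset_def, Set.mem_union, Set.mem_inter_iff, Set.mem_sdiff,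
    Set.mem_empty_iff_false, iff_false, not_and] at *
  constructor
  · rintro ⟨h, -⟩
    exact ⟨fun x => by grind, fun x => by grind⟩
  · rintro ⟨h, -⟩
    exact ⟨fun x => by grind, hWP⟩

end SpectralPartition

open SpectralPartition in
/-- Property (w) versus Browder's theorem. -/
theorem property_w_iff_browder {X : Type*} [NormedAddCommGroup X] [NormedSpace ℂ X]
    [CompleteSpace X] (T : X →L[ℂ] X)
    (hU : σa T = σSF T ∪ E0spec T) (hD : σSF T ∩ E0spec T = ∅) :
    (spectrum ℂ T = σW T ∪ Poles0 T ∧ σW T ∩ Poles0 T = ∅) ↔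
      (σW T \ σSF T = (E0spec T \ Poles0 T) ∪ (spectrum ℂ T \ σa T) ∧
        (E0spec T \ Poles0 T) ∩ (spectrum ℂ T \ σa T) = ∅) :=
  partition_iff_of_subsets (σW_subset_spectrum T) (σa_subset_spectrum T) (σSF_subset_σW T)
    (E0spec_subset_σa T) (Poles0_subset_σa T) (σW_inter_Poles0_eq_empty T) hU hD
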